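/- Let Z be an integrable real random variable with standard realisation Z' on [0,1], and α ∈ (0,1), λ > 0. Define Z₁ = Z'·𝟙_{[0,α]} − λ·𝟙_{(α,1]} on ([0,1], Lebesgue). If Y is any real random variable such that Y is stochastically dominated by Z and P(Y ≤ −λ) ≥ 1 − α, then Y is stochastically dominated by Z₁; moreover E[Z₁] = E[Z'𝟙_{[0,α]}] − λ(1−α), so E[Z₁] < 0 whenever E[Z'𝟙_{[0,α]}] < λ(1−α). -/

import Mathlib

/-!
`Z'` has the law of `Z`: for `0 ≤ a ≤ 1` the Lebesgue measure of `{t < Z'} ∩ [0, a]` is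
`min (a, P(t < Z))`. For `t < -λ` the set `{t < Z₁}` is all of `[0, 1]`; for `t ≥ -λ` the
hypothesis `P'(Y ≤ -λ) ≥ 1 - α` gives `P'(t < Y) ≤ min (α, P(t < Z))`, the measure of
`{t < Z'} ∩ [0, α] ⊆ {t < Z₁}`. The upper bound and the layer-cake formula give
`∫_{[0,a]} Z' ≤ E[Z] < ∞`, so the integral of `Z₁` splits over `[0, α]` and `(α, 1]`.
-/

open MeasureTheory Set Filter
open scoped ENNReal

/-- The standard realisation of a real random variable with law induced by `(P, Z)`:
`Z'(s) = sup {t : P(Z ≥ t) ≥ s}`, on `[0,1]` with Lebesgue measure. -/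
noncomputable def stdReal {E : Type*} [MeasurableSpace E] (P : Measure E) (Z : E → ℝ) :
    ℝ → ℝ :=
  fun s => sSup {t : ℝ | ENNReal.ofReal s ≤ P {e | t ≤ Z e}}

/-- The random variable `Z₁ = Z'·𝟙_{[0,α]} − λ·𝟙_{(α,1]}` on `([0,1], Leb)`. -/
noncomputable def zOne {E : Type*} [MeasurableSpace E] (P : Measure E) (Z : E → ℝ)
    (α lam : ℝ) : ℝ → ℝ :=
  fun s => (Icc (0:ℝ) α).indicator (stdReal P Z) s
    - lam * (Ioc α 1).indicator (fun _ => (1:ℝ)) s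

section StdReal

variable {E : Type*} [MeasurableSpace E] {P : Measure E} {Z : E → ℝ}

lemma zero_mem_stdReal_set [IsProbabilityMeasure P] (hZ0 : ∀ e, 0 ≤ Z e) {s : ℝ}
    (hs : s ≤ 1) : (0:ℝ) ∈ {t : ℝ | ENNReal.ofReal s ≤ P {e | t ≤ Z e}} := by
  simpa [hZ0] using hs

lemma bddAbove_stdReal_set [IsFiniteMeasure P] (hZ : AEMeasurable Z P) {s : ℝ} (hs : 0 < s) :
    BddAbove {t : ℝ | ENNReal.ofReal s ≤ P {e | t ≤ Z e}} := by
  have hempty : (⋂ n : ℕ, {e | (n:ℝ) ≤ Z e}) = ∅ :=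
    iInter_eq_empty_iff.mpr fun e => (exists_nat_gt (Z e)).imp fun _ hn => not_le.mpr hn
  have htend : Tendsto (fun n : ℕ => P {e | (n:ℝ) ≤ Z e}) atTop (nhds 0) := by
    have := tendsto_measure_iInter_atTop (μ := P) (s := fun n : ℕ => {e | (n:ℝ) ≤ Z e})
      (fun n : ℕ => hZ.nullMeasurableSet_preimage measurableSet_Ici)
      (fun n m hnm e (he : (m:ℝ) ≤ Z e) => (Nat.cast_le.mpr hnm).trans he)
      ⟨0, measure_ne_top _ _⟩
    rwa [hempty, measure_empty] at this
  obtain ⟨n, hn⟩ := (htend.eventually_lt_const (ENNReal.ofReal_pos.mpr hs)).exists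
  refine ⟨n, fun t ht => le_of_not_gt fun hnt => ?_⟩
  exact (ht.trans (measure_mono fun e (he : t ≤ Z e) => hnt.le.trans he)).not_gt hn

lemma stdReal_nonneg [IsProbabilityMeasure P] (hZ0 : ∀ e, 0 ≤ Z e) {s : ℝ} (hs : s ≤ 1) :
    0 ≤ stdReal P Z s := by
  by_cases h : BddAbove {t : ℝ | ENNReal.ofReal s ≤ P {e | t ≤ Z e}}
  · exact le_csSup h (zero_mem_stdReal_set hZ0 hs)
  -- happens for `s ≤ 0`, where the set is all of `ℝ` and `sSup` takes the junk value `0`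
  · rw [stdReal, Real.sSup_of_not_bddAbove h]

lemma le_measure_lt_of_lt_stdReal [IsProbabilityMeasure P] (hZ0 : ∀ e, 0 ≤ Z e) {s t : ℝ}
    (hs : s ≤ 1) (ht : t < stdReal P Z s) : ENNReal.ofReal s ≤ P {e | t < Z e} := by
  obtain ⟨u, hu, htu⟩ := exists_lt_of_lt_csSup ⟨0, zero_mem_stdReal_set hZ0 hs⟩ ht
  exact hu.trans (measure_mono fun e (he : u ≤ Z e) => htu.trans_le he)

lemma lt_stdReal_of_lt_measure [IsFiniteMeasure P] (hZ : AEMeasurable Z P) {s t : ℝ}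
    (hs : 0 < s) (h : ENNReal.ofReal s < P {e | t < Z e}) : t < stdReal P Z s := by
  set u : ℕ → ℝ := fun n => t + 1 / ((n:ℝ) + 1)
  have hu_gt : ∀ n, t < u n := fun n => lt_add_of_pos_right t (by positivity)
  have hunion : {e | t < Z e} = ⋃ n, {e | u n ≤ Z e} := by
    ext e
    simp only [mem_iUnion]
    refine ⟨fun (he : t < Z e) => ?_, fun ⟨n, hn⟩ => (hu_gt n).trans_le hn⟩
    obtain ⟨n, hn⟩ := exists_nat_one_div_lt (sub_pos.mpr he)
    exact ⟨n, show t + 1 / ((n:ℝ) + 1) ≤ Z e by linarith⟩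
  have hmono : Monotone fun n => {e | u n ≤ Z e} := fun n m hnm e (he : u n ≤ Z e) =>
    show u m ≤ Z e from le_trans (add_le_add_right (Nat.one_div_le_one_div hnm) t) he
  rw [hunion, hmono.measure_iUnion] at h
  obtain ⟨n, hn⟩ := lt_iSup_iff.mp h
  exact (hu_gt n).trans_le (le_csSup (bddAbove_stdReal_set hZ hs) hn.le)

lemma stdReal_antitoneOn [IsProbabilityMeasure P] (hZ0 : ∀ e, 0 ≤ Z e)
    (hZ : AEMeasurable Z P) : AntitoneOn (stdReal P Z) (Ioc 0 1) :=
  fun _ hs _ hs' hss' => csSup_le_csSup (bddAbove_stdReal_set hZ hs.1)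
    ⟨0, zero_mem_stdReal_set hZ0 hs'.2⟩ fun _ ht => (ENNReal.ofReal_le_ofReal hss').trans ht

lemma volume_lt_stdReal_inter_le [IsProbabilityMeasure P] (hZ0 : ∀ e, 0 ≤ Z e) {t a : ℝ}
    (ha : a ≤ 1) : volume ({s | t < stdReal P Z s} ∩ Icc 0 a) ≤ P {e | t < Z e} := by
  have hsub : {s | t < stdReal P Z s} ∩ Icc 0 a ⊆ Icc 0 (P {e | t < Z e}).toReal :=
    fun s ⟨hs, hs0, hsa⟩ => ⟨hs0, (ENNReal.ofReal_le_iff_le_toReal (measure_ne_top _ _)).mp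
      (le_measure_lt_of_lt_stdReal hZ0 (hsa.trans ha) hs)⟩
  calc volume ({s | t < stdReal P Z s} ∩ Icc 0 a)
      ≤ volume (Icc 0 (P {e | t < Z e}).toReal) := measure_mono hsub
    _ = P {e | t < Z e} := by simp [Real.volume_Icc]

lemma min_le_volume_lt_stdReal_inter [IsFiniteMeasure P] (hZ : AEMeasurable Z P) (t a : ℝ) :
    min (ENNReal.ofReal a) (P {e | t < Z e}) ≤ volume ({s | t < stdReal P Z s} ∩ Icc 0 a) := by
  set c := (P {e | t < Z e}).toReal
  have hc : ENNReal.ofReal c = P {e | t < Z e} := ENNReal.ofReal_toReal (measure_ne_top _ _)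
  have hsub : Ioo 0 (min a c) ⊆ {s | t < stdReal P Z s} ∩ Icc 0 a := by
    rintro s ⟨hs0, hs⟩
    refine ⟨lt_stdReal_of_lt_measure hZ hs0 ?_, hs0.le, (hs.trans_le (min_le_left _ _)).le⟩
    rw [← hc, ENNReal.ofReal_lt_ofReal_iff_of_nonneg hs0.le]
    exact hs.trans_le (min_le_right _ _)
  calc min (ENNReal.ofReal a) (P {e | t < Z e}) = volume (Ioo 0 (min a c)) := by
        rw [Real.volume_Ioo, sub_zero, ENNReal.ofReal_min, hc]
    _ ≤ _ := measure_mono hsub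

lemma aemeasurable_stdReal [IsProbabilityMeasure P] (hZ0 : ∀ e, 0 ≤ Z e)
    (hZ : AEMeasurable Z P) {a : ℝ} (ha : a ≤ 1) :
    AEMeasurable (stdReal P Z) (volume.restrict (Icc 0 a)) := by
  rw [Measure.restrict_congr_set Ioc_ae_eq_Icc.symm]
  exact aemeasurable_restrict_of_antitoneOn measurableSet_Ioc
    ((stdReal_antitoneOn hZ0 hZ).mono (Ioc_subset_Ioc_right ha))

lemma lintegral_stdReal_le [IsProbabilityMeasure P] (hZ0 : ∀ e, 0 ≤ Z e)
    (hZ : AEMeasurable Z P) {a : ℝ} (ha : a ≤ 1) :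
    ∫⁻ s in Icc 0 a, ENNReal.ofReal (stdReal P Z s) ≤ ∫⁻ e, ENNReal.ofReal (Z e) ∂P := by
  rw [lintegral_eq_lintegral_meas_lt _ (ae_restrict_of_forall_mem measurableSet_Icc
      fun s hs => stdReal_nonneg hZ0 (hs.2.trans ha)) (aemeasurable_stdReal hZ0 hZ ha),
    lintegral_eq_lintegral_meas_lt P (ae_of_all _ hZ0) hZ]
  refine lintegral_mono fun t => ?_
  rw [Measure.restrict_apply' measurableSet_Icc]
  exact volume_lt_stdReal_inter_le hZ0 ha

lemma integrableOn_stdReal [IsProbabilityMeasure P] (hZ0 : ∀ e, 0 ≤ Z e)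
    (hZint : Integrable Z P) {a : ℝ} (ha : a ≤ 1) : IntegrableOn (stdReal P Z) (Icc 0 a) := by
  have hnonneg : 0 ≤ᵐ[volume.restrict (Icc 0 a)] stdReal P Z :=
    ae_restrict_of_forall_mem measurableSet_Icc fun s hs => stdReal_nonneg hZ0 (hs.2.trans ha)
  refine ⟨(aemeasurable_stdReal hZ0 hZint.aemeasurable ha).aestronglyMeasurable,
    (hasFiniteIntegral_iff_ofReal hnonneg).mpr ?_⟩
  exact (lintegral_stdReal_le hZ0 hZint.aemeasurable ha).trans_lt hZint.lintegral_lt_top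

end StdReal

section ZOne

variable {E : Type*} [MeasurableSpace E] {P : Measure E} {Z : E → ℝ} {α lam : ℝ}

lemma zOne_eq_stdReal {s : ℝ} (hs : s ∈ Icc 0 α) : zOne P Z α lam s = stdReal P Z s := by
  have hs' : s ∉ Ioc α 1 := fun h => h.1.not_ge hs.2
  simp [zOne, indicator_of_mem hs, indicator_of_notMem hs']

lemma zOne_eq_neg {s : ℝ} (hs : s ∈ Ioc α 1) : zOne P Z α lam s = -lam := by
  have hs' : s ∉ Icc 0 α := fun h => hs.1.not_ge h.2
  simp [zOne, indicator_of_mem hs, indicator_of_notMem hs']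

lemma integral_zOne [IsProbabilityMeasure P] (hZ0 : ∀ e, 0 ≤ Z e) (hZint : Integrable Z P)
    (hα0 : 0 ≤ α) (hα1 : α ≤ 1) :
    ∫ s in Icc 0 1, zOne P Z α lam s = (∫ s in Icc 0 α, stdReal P Z s) - lam * (1 - α) := by
  have hleft : EqOn (zOne P Z α lam) (stdReal P Z) (Icc 0 α) := fun _ => zOne_eq_stdReal
  have hright : EqOn (zOne P Z α lam) (fun _ => -lam) (Ioc α 1) := fun _ => zOne_eq_neg
  have hint_left : IntegrableOn (zOne P Z α lam) (Icc 0 α) :=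
    (integrableOn_stdReal hZ0 hZint hα1).congr_fun hleft.symm measurableSet_Icc
  have hint_right : IntegrableOn (zOne P Z α lam) (Ioc α 1) :=
    (integrableOn_const measure_Ioc_lt_top.ne).congr_fun hright.symm measurableSet_Ioc
  rw [← Icc_union_Ioc_eq_Icc hα0 hα1,
    setIntegral_union ((Iic_disjoint_Ioc le_rfl).mono_left Icc_subset_Iic_self)
      measurableSet_Ioc hint_left hint_right,
    setIntegral_congr_fun measurableSet_Icc hleft, setIntegral_congr_fun measurableSet_Ioc hright,
    setIntegral_const, Real.volume_real_Ioc, max_eq_left (sub_nonneg.mpr hα1), smul_eq_mul]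
  ring

end ZOne

lemma measure_lt_le_ofReal_of_le_measure_le {Ω : Type*} [MeasurableSpace Ω] {μ : Measure Ω}
    [IsProbabilityMeasure μ] {Y : Ω → ℝ} (hY : Measurable Y) {α u t : ℝ}
    (h : ENNReal.ofReal (1 - α) ≤ μ {ω | Y ω ≤ u}) (hut : u ≤ t) :
    μ {ω | t < Y ω} ≤ ENNReal.ofReal α := by
  have hsub : {ω | t < Y ω} ⊆ {ω | Y ω ≤ u}ᶜ := fun ω (hω : t < Y ω) (hle : Y ω ≤ u) =>
    hle.not_gt (hut.trans_lt hω)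
  calc μ {ω | t < Y ω} ≤ μ {ω | Y ω ≤ u}ᶜ := measure_mono hsub
    _ = 1 - μ {ω | Y ω ≤ u} := prob_compl_eq_one_sub (hY measurableSet_Iic)
    _ ≤ 1 - ENNReal.ofReal (1 - α) := tsub_le_tsub_left h 1
    _ ≤ ENNReal.ofReal α := tsub_le_iff_right.mpr <| by
        simpa using ENNReal.ofReal_add_le (p := α) (q := 1 - α)

lemma measure_lt_le_volume_lt_zOne {E E' : Type*} [MeasurableSpace E] [MeasurableSpace E']
    {P : Measure E} [IsProbabilityMeasure P] {Z : E → ℝ} (hZ0 : ∀ e, 0 ≤ Z e)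
    (hZ : AEMeasurable Z P) {α lam : ℝ} (hα1 : α ≤ 1) (hlam : 0 ≤ lam)
    {P' : Measure E'} [IsProbabilityMeasure P'] {Y : E' → ℝ} (hY : Measurable Y)
    (hdom : ∀ t : ℝ, P' {e | t < Y e} ≤ P {e | t < Z e})
    (hneg : ENNReal.ofReal (1 - α) ≤ P' {e | Y e ≤ -lam}) (t : ℝ) :
    P' {e | t < Y e} ≤ volume {s | s ∈ Icc (0:ℝ) 1 ∧ t < zOne P Z α lam s} := by
  rcases lt_or_ge t (-lam) with ht | ht
  · have hall : Icc (0:ℝ) 1 ⊆ {s | s ∈ Icc (0:ℝ) 1 ∧ t < zOne P Z α lam s} := by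
      intro s hs
      refine ⟨hs, ?_⟩
      rcases le_or_gt s α with hsα | hsα
      · rw [zOne_eq_stdReal ⟨hs.1, hsα⟩]
        linarith [stdReal_nonneg (P := P) hZ0 hs.2]
      · rwa [zOne_eq_neg ⟨hsα, hs.2⟩]
    calc P' {e | t < Y e} ≤ 1 := prob_le_one
      _ = volume (Icc (0:ℝ) 1) := by simp
      _ ≤ _ := measure_mono hall
  · have hsub : {s | t < stdReal P Z s} ∩ Icc 0 α
        ⊆ {s | s ∈ Icc (0:ℝ) 1 ∧ t < zOne P Z α lam s} :=
      fun s ⟨hts, hs⟩ => ⟨⟨hs.1, hs.2.trans hα1⟩, by rwa [zOne_eq_stdReal hs]⟩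
    calc P' {e | t < Y e} ≤ min (ENNReal.ofReal α) (P {e | t < Z e}) :=
          le_min (measure_lt_le_ofReal_of_le_measure_le hY hneg ht) (hdom t)
      _ ≤ volume ({s | t < stdReal P Z s} ∩ Icc 0 α) := min_le_volume_lt_stdReal_inter hZ t α
      _ ≤ _ := measure_mono hsub

theorem stmt10_general {E E' : Type*} [MeasurableSpace E] [MeasurableSpace E']
    (P : Measure E) [IsProbabilityMeasure P]
    (Z : E → ℝ) (hZ0 : ∀ e, 0 ≤ Z e) (hZint : Integrable Z P)
    (α lam : ℝ) (hα : α ∈ Ioo (0:ℝ) 1) (hlam : 0 < lam)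
    (P' : Measure E') [IsProbabilityMeasure P'] (Y : E' → ℝ) (hY : Measurable Y)
    (hdom : ∀ t : ℝ, P' {e | t < Y e} ≤ P {e | t < Z e})
    (hneg : ENNReal.ofReal (1 - α) ≤ P' {e | Y e ≤ -lam}) :
    (∀ t : ℝ, P' {e | t < Y e}
        ≤ volume {s | s ∈ Icc (0:ℝ) 1 ∧ t < zOne P Z α lam s}) ∧
    (∫ s in Icc (0:ℝ) 1, zOne P Z α lam s
        = (∫ s in Icc (0:ℝ) α, stdReal P Z s) - lam * (1 - α)) ∧
    ((∫ s in Icc (0:ℝ) α, stdReal P Z s) < lam * (1 - α) →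
      (∫ s in Icc (0:ℝ) 1, zOne P Z α lam s) < 0) := by
  have hintegral := integral_zOne (lam := lam) hZ0 hZint hα.1.le hα.2.le
  refine ⟨measure_lt_le_volume_lt_zOne hZ0 hZint.aemeasurable hα.2.le hlam.le hY hdom hneg,
    hintegral, fun h => ?_⟩
  rw [hintegral]
  linarith

/-- If `Y` is stochastically dominated by a nonnegative integrable `Z` and
`P(Y ≤ −λ) ≥ 1 − α`, then `Y` is stochastically dominated by
`Z₁ = Z'𝟙_{[0,α]} − λ𝟙_{(α,1]}`; moreover `E[Z₁] = E[Z'𝟙_{[0,α]}] − λ(1−α)`,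
so `E[Z₁] < 0` whenever `E[Z'𝟙_{[0,α]}] < λ(1−α)`. -/
theorem stmt10 {E E' : Type*} [MeasurableSpace E] [MeasurableSpace E']
    (P : Measure E) [IsProbabilityMeasure P]
    (Z : E → ℝ) (hZmeas : Measurable Z) (hZ0 : ∀ e, 0 ≤ Z e) (hZint : Integrable Z P)
    (α lam : ℝ) (hα : α ∈ Ioo (0:ℝ) 1) (hlam : 0 < lam)
    (P' : Measure E') [IsProbabilityMeasure P'] (Y : E' → ℝ) (hY : Measurable Y)
    (hdom : ∀ t : ℝ, P' {e | t < Y e} ≤ P {e | t < Z e})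
    (hneg : ENNReal.ofReal (1 - α) ≤ P' {e | Y e ≤ -lam}) :
    (∀ t : ℝ, P' {e | t < Y e}
        ≤ volume {s | s ∈ Icc (0:ℝ) 1 ∧ t < zOne P Z α lam s}) ∧
    (∫ s in Icc (0:ℝ) 1, zOne P Z α lam s
        = (∫ s in Icc (0:ℝ) α, stdReal P Z s) - lam * (1 - α)) ∧
    ((∫ s in Icc (0:ℝ) α, stdReal P Z s) < lam * (1 - α) →
      (∫ s in Icc (0:ℝ) 1, zOne P Z α lam s) < 0) :=
  stmt10_general P Z hZ0 hZint α lam hα hlam P' Y hY hdom hneg
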